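/- For every integer i ≥ 1, the central binomial coefficient satisfies i·C(2i, i) ≤ √(i/π)·2^{2i}, i.e., i·(2i)!/(i!)² ≤ √(i/π)·4^i. -/

import Mathlib

/-!
The Wallis partial product `W n` equals `16 ^ n / (C(2n, n) ^ 2 (2n + 1))` and is at least
`(2n + 1) / (2n + 2) · π / 2`. Since `(2n + 1) ^ 2 ≥ 4n (n + 1)`, this gives
`π n C(2n, n) ^ 2 ≤ 16 ^ n`; multiplying by `n / π` and taking square roots yields the bound.
-/

open Real Nat

theorem Real.Wallis.W_eq_sixteen_pow_div_centralBinom_sq (n : ℕ) :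
    Wallis.W n = 16 ^ n / ((centralBinom n : ℝ) ^ 2 * (2 * n + 1)) := by
  have hfac : ((2 * n)! : ℝ) = centralBinom n * (n ! : ℝ) ^ 2 := by
    rw [two_mul, ← add_choose_mul_factorial_mul_factorial, centralBinom_eq_two_mul_choose, two_mul]
    push_cast
    ring
  have : (n ! : ℝ) ≠ 0 := by positivity
  rw [Wallis.W_eq_factorial_ratio, hfac, pow_mul]
  field_simp
  norm_num

theorem Nat.pi_mul_mul_centralBinom_sq_le (n : ℕ) :
    π * n * (centralBinom n : ℝ) ^ 2 ≤ 16 ^ n := by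
  have hW := Wallis.le_W n
  have := centralBinom_pos n
  rw [Wallis.W_eq_sixteen_pow_div_centralBinom_sq, le_div_iff₀ (by positivity)] at hW
  have hn : (n : ℝ) ≤ (2 * n + 1) / (2 * n + 2) * (2 * n + 1) / 2 := by
    rw [div_mul_eq_mul_div, div_div, le_div_iff₀ (by positivity)]
    nlinarith
  calc π * n * (centralBinom n : ℝ) ^ 2
      ≤ π * ((2 * n + 1) / (2 * n + 2) * (2 * n + 1) / 2) * (centralBinom n : ℝ) ^ 2 := by
        gcongr
    _ = (2 * n + 1) / (2 * n + 2) * (π / 2) * ((centralBinom n : ℝ) ^ 2 * (2 * n + 1)) := by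
        ring
    _ ≤ 16 ^ n := hW

theorem central_binom_bound (i : ℕ) :
    (i : ℝ) * Nat.choose (2 * i) i ≤ Real.sqrt ((i : ℝ) / Real.pi) * 4 ^ i := by
  rw [← centralBinom_eq_two_mul_choose]
  refine (pow_le_pow_iff_left₀ (by positivity) (by positivity) two_ne_zero).mp ?_
  calc ((i : ℝ) * centralBinom i) ^ 2 = i / π * (π * i * (centralBinom i : ℝ) ^ 2) := by
        field_simp
    _ ≤ i / π * 16 ^ i := by gcongr; exact pi_mul_mul_centralBinom_sq_le i
    _ = (√(i / π) * 4 ^ i) ^ 2 := by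
        rw [mul_pow, sq_sqrt (by positivity), ← pow_mul, pow_mul']
        norm_num
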